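/- arXiv:1302.4793 — 6 statements merged into one kernel-verified Lean document; each statement's English description precedes it below -/
import Mathlib

section
/- Let P₂ be the 3×3 stochastic matrix with rows (1−p_h, p₂, p₁), (0, 1−p_h, p_h), (p_g, 0, 1−p_g), where p₁+p₂ = p_h, 0 < p₁, 0 ≤ p₂, 0 < p_g ≤ 1, p_h ≤ 1. Then the vector π = c·(p_g, p_g p₂/p_h, p_h) with c = 1/(p_g + p_g p₂/p_h + p_h) satisfies π P₂ = π and sums to 1, so the steady-state vector π₂ of P₂ has third component π_{2,2} = p_h / (p_h + p_g(1 + p₂/p_h)). -/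
open Matrix

/-- The vector `π = c·(p_g, p_g p₂/p_h, p_h)` with `c = 1/(p_g + p_g p₂/p_h + p_h)` is a
steady-state distribution of the 3×3 matrix `P₂` with rows `(1−p_h, p₂, p₁)`,
`(0, 1−p_h, p_h)`, `(p_g, 0, 1−p_g)` (where `p₁ + p₂ = p_h`), and its third component
equals `p_h / (p_h + p_g(1 + p₂/p_h))`. -/
theorem stmt4 (p1 p2 ph pg : ℝ) (hp1 : 0 < p1) (hp2 : 0 ≤ p2) (hsum : p1 + p2 = ph)
    (hph1 : ph ≤ 1) (hpg : 0 < pg) (hpg1 : pg ≤ 1)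
    (c : ℝ) (hc : c = 1 / (pg + pg * p2 / ph + ph)) :
    (c • ![pg, pg * p2 / ph, ph]) ᵥ* !![1 - ph, p2, p1; 0, 1 - ph, ph; pg, 0, 1 - pg]
        = c • ![pg, pg * p2 / ph, ph] ∧
      (∑ i : Fin 3, (c • ![pg, pg * p2 / ph, ph]) i) = 1 ∧
      (c • ![pg, pg * p2 / ph, ph]) 2 = ph / (ph + pg * (1 + p2 / ph)) := by
  subst hsum hc
  have hph : 0 < p1 + p2 := by linarith
  have hden : pg + pg * p2 / (p1 + p2) + (p1 + p2) > 0 := by positivity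
  refine ⟨?_, ?_, ?_⟩
  · funext i
    fin_cases i <;>
      simp [vecMul, dotProduct, Fin.sum_univ_three] <;> field_simp <;> ring
  · simp [Fin.sum_univ_three]
    field_simp
  · have h2 : p1 + p2 + pg * (1 + p2 / (p1 + p2)) > 0 := by positivity
    simp only [Pi.smul_apply, Matrix.cons_val_two, Matrix.tail_cons, Matrix.head_cons,
      smul_eq_mul, one_div]
    rw [eq_div_iff h2.ne', inv_mul_eq_div, div_mul_eq_mul_div, div_eq_iff hden.ne']
    field_simp
    ring
end

section
/- For double-slot charging, the transmission probability p_t = p_g · p_h/(p_h + p_g(1 + p₂/p_h)), with p_h = 1−e^{−π r_h² λ_p}, p_g = e^{−π r_g² λ_p}, p₂ = e^{−π h₁² λ_p}−e^{−π r_h² λ_p}, h₁ = (P_s/(η P_p))^{−1/α}, is a strictly decreasing function of P_s on the interval (η P_p r_h^{−α}, 2η P_p r_h^{−α}]. -/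
open Real Set

/- On the interval `h₁ < r_h`, so `p₂ > 0` and every denominator is positive. As `P_s` grows,
`h₁` decreases, so `p₂` increases, so the denominator `p_h + p_g (1 + p₂/p_h)` increases and
`p_t` decreases. -/

lemma rpow_neg_inv_lt_of_rpow_neg_lt {a r x : ℝ} (ha : 0 < a) (hr : 0 < r)
    (hx : r ^ (-a) < x) : x ^ (-(1 / a)) < r :=
  calc x ^ (-(1 / a)) < (r ^ (-a)) ^ (-(1 / a)) :=
        rpow_lt_rpow_of_neg (rpow_pos_of_pos hr _) hx (by simpa using ha)
    _ = r := by rw [← rpow_mul hr.le, show -a * -(1 / a) = 1 by field_simp, rpow_one]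

lemma strictAntiOn_div_rpow_neg_inv {a c : ℝ} (ha : 0 < a) (hc : 0 < c) :
    StrictAntiOn (fun x : ℝ => (x / c) ^ (-(1 / a))) (Ioi 0) :=
  fun _ hx _ _ hxy =>
    rpow_lt_rpow_of_neg (div_pos hx hc) (div_lt_div_of_pos_right hxy hc) (by simpa using ha)

lemma strictAntiOn_exp_neg_pi_mul_sq_mul {l : ℝ} (hl : 0 < l) :
    StrictAntiOn (fun h : ℝ => exp (-(π * h ^ 2 * l))) (Ici 0) := by
  intro x hx y _ hxy
  simp only [exp_lt_exp, neg_lt_neg_iff]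
  have hsq : x ^ 2 < y ^ 2 := pow_lt_pow_left₀ hxy hx two_ne_zero
  gcongr

lemma strictAntiOn_mul_div_add_mul_one_add_div {p q : ℝ} (hp : 0 < p) (hq : 0 < q) :
    StrictAntiOn (fun t : ℝ => q * (p / (p + q * (1 + t / p)))) (Ioi 0) := by
  intro x hx y _ hxy
  have hx₀ : 0 < x := hx
  have hden : 0 < p + q * (1 + x / p) := by positivity
  dsimp only
  gcongr

theorem stmt5_general (lp rh rg Pp a e : ℝ) (hlp : 0 < lp) (hrh : 0 < rh)
    (hPp : 0 < Pp) (ha : 2 < a) (he0 : 0 < e) :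
    StrictAntiOn (fun Ps : ℝ =>
        let ph := 1 - Real.exp (-(π * rh ^ 2 * lp))
        let pg := Real.exp (-(π * rg ^ 2 * lp))
        let h1 := (Ps / (e * Pp)) ^ (-(1 / a) : ℝ)
        let p2 := Real.exp (-(π * h1 ^ 2 * lp)) - Real.exp (-(π * rh ^ 2 * lp))
        pg * (ph / (ph + pg * (1 + p2 / ph))))
      (Set.Ioc (e * Pp * rh ^ (-a : ℝ)) (2 * e * Pp * rh ^ (-a : ℝ))) := by
  have ha0 : 0 < a := by linarith
  have hePp : 0 < e * Pp := mul_pos he0 hPp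
  have hph : 0 < 1 - exp (-(π * rh ^ 2 * lp)) := by
    rw [sub_pos, exp_lt_one_iff, neg_lt_zero]; positivity
  set S := Ioi (e * Pp * rh ^ (-a))
  have hh1 : StrictAntiOn (fun Ps : ℝ => (Ps / (e * Pp)) ^ (-(1 / a))) S :=
    (strictAntiOn_div_rpow_neg_inv ha0 hePp).mono (Ioi_subset_Ioi (by positivity))
  have hh1_bounds : ∀ Ps ∈ S, 0 ≤ (Ps / (e * Pp)) ^ (-(1 / a)) ∧ (Ps / (e * Pp)) ^ (-(1 / a)) < rh :=
    fun Ps hPs => ⟨rpow_nonneg (div_pos (lt_trans (by positivity) hPs) hePp).le _,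
      rpow_neg_inv_lt_of_rpow_neg_lt ha0 hrh ((lt_div_iff₀' hePp).2 hPs)⟩
  have hp2 : StrictMonoOn (fun Ps : ℝ => exp (-(π * ((Ps / (e * Pp)) ^ (-(1 / a))) ^ 2 * lp))
      - exp (-(π * rh ^ 2 * lp))) S := fun x hx y hy hxy =>
    sub_lt_sub_right (((strictAntiOn_exp_neg_pi_mul_sq_mul hlp).comp hh1
      fun Ps hPs => (hh1_bounds Ps hPs).1) hx hy hxy) _
  have hp2_pos : MapsTo (fun Ps : ℝ => exp (-(π * ((Ps / (e * Pp)) ^ (-(1 / a))) ^ 2 * lp))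
      - exp (-(π * rh ^ 2 * lp))) S (Ioi 0) := fun Ps hPs =>
    sub_pos.2 (strictAntiOn_exp_neg_pi_mul_sq_mul hlp (hh1_bounds Ps hPs).1 hrh.le
      (hh1_bounds Ps hPs).2)
  exact ((strictAntiOn_mul_div_add_mul_one_add_div hph (exp_pos _)).comp_strictMonoOn hp2
    hp2_pos).mono Ioc_subset_Ioi_self

/-- For double-slot charging, `p_t(P_s) = p_g · p_h/(p_h + p_g(1 + p₂(P_s)/p_h))`, with
`p_h = 1−e^{−π r_h² λ_p}`, `p_g = e^{−π r_g² λ_p}`, `p₂(P_s) = e^{−π h₁² λ_p} − e^{−π r_h² λ_p}`,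
`h₁ = (P_s/(η P_p))^{−1/α}`, is strictly decreasing in `P_s` on
`(η P_p r_h^{−α}, 2 η P_p r_h^{−α}]`. -/
theorem stmt5 (lp rh rg Pp a e : ℝ) (hlp : 0 < lp) (hrh : 0 < rh) (hrhrg : rh < rg)
    (hPp : 0 < Pp) (ha : 2 < a) (he0 : 0 < e) (he1 : e < 1) :
    StrictAntiOn (fun Ps : ℝ =>
        let ph := 1 - Real.exp (-(π * rh ^ 2 * lp))
        let pg := Real.exp (-(π * rg ^ 2 * lp))
        let h1 := (Ps / (e * Pp)) ^ (-(1 / a) : ℝ)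
        let p2 := Real.exp (-(π * h1 ^ 2 * lp)) - Real.exp (-(π * rh ^ 2 * lp))
        pg * (ph / (ph + pg * (1 + p2 / ph))))
      (Set.Ioc (e * Pp * rh ^ (-a : ℝ)) (2 * e * Pp * rh ^ (-a : ℝ))) :=
  stmt5_general lp rh rg Pp a e hlp hrh hPp ha he0
end

section
/- With p₁, p₂', p₃, p_g > 0 and p_h = p₁ + p₂' + p₃ ≤ 1, p_g ≤ 1, the lower-bound expression p_g(p₁+p₂')/((p₁+p₂') + p_g(1 + p₂'/(p₁+p₂'))) is strictly less than the upper-bound expression p_g p_h/(p_h + p_g(1 + (p₂'+p₃)/p_h)). -/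
/-! Dividing through by `x`, both bounds have the form `c / (1 + c * ((x + q) / x ^ 2))` with
`c = p_g`, namely `(x, q) = (p₁ + p₂', p₂')` and `(x, q) = (p_h, p₂' + p₃) = (p₁ + p₂' + p₃, p₂' + p₃)`.
This is strictly decreasing in the load `(x + q) / x ^ 2`, and shifting `x` and `q` by the same
`t > 0` strictly lowers the load. -/

lemma mul_div_add_mul_one_add_div (c x q : ℝ) (hx : x ≠ 0) :
    c * x / (x + c * (1 + q / x)) = c / (1 + c * ((x + q) / x ^ 2)) := by
  field_simp

lemma div_one_add_mul_lt_div_one_add_mul {c s t : ℝ} (hc : 0 < c) (hs : 0 ≤ s) (hst : s < t) :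
    c / (1 + c * t) < c / (1 + c * s) := by
  gcongr

-- `(a + q)(a + t)² - a²(a + q + 2t) = 2aqt + (a + q)t²`.
lemma add_add_div_sq_lt {a q t : ℝ} (ha : 0 < a) (hq : 0 ≤ q) (ht : 0 < t) :
    (a + t + (q + t)) / (a + t) ^ 2 < (a + q) / a ^ 2 := by
  rw [div_lt_div_iff₀ (by positivity) (by positivity)]
  nlinarith [mul_nonneg (mul_nonneg ha.le hq) ht.le, mul_pos (add_pos_of_pos_of_nonneg ha hq)
    (mul_pos ht ht)]

theorem stmt6_general (p1 p2' p3 pg ph : ℝ) (hp1 : 0 < p1) (hp2' : 0 < p2') (hp3 : 0 < p3)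
    (hpg : 0 < pg) (hph : ph = p1 + p2' + p3) :
    pg * (p1 + p2') / ((p1 + p2') + pg * (1 + p2' / (p1 + p2')))
      < pg * ph / (ph + pg * (1 + (p2' + p3) / ph)) := by
  subst hph
  have ha : 0 < p1 + p2' := by linarith
  rw [mul_div_add_mul_one_add_div _ _ _ ha.ne', mul_div_add_mul_one_add_div _ _ _ (by positivity)]
  exact div_one_add_mul_lt_div_one_add_mul hpg (by positivity) (add_add_div_sq_lt ha hp2'.le hp3)

/-- With `p₁, p₂', p₃, p_g > 0`, `p_h = p₁ + p₂' + p₃ ≤ 1`, `p_g ≤ 1`, the lower bound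
`p_g(p₁+p₂')/((p₁+p₂') + p_g(1 + p₂'/(p₁+p₂')))` is strictly less than the upper bound
`p_g p_h/(p_h + p_g(1 + (p₂'+p₃)/p_h))`. -/
theorem stmt6 (p1 p2' p3 pg ph : ℝ) (hp1 : 0 < p1) (hp2' : 0 < p2') (hp3 : 0 < p3)
    (hpg : 0 < pg) (hph : ph = p1 + p2' + p3) (hph1 : ph ≤ 1) (hpg1 : pg ≤ 1) :
    pg * (p1 + p2') / ((p1 + p2') + pg * (1 + p2' / (p1 + p2')))
      < pg * ph / (ph + pg * (1 + (p2' + p3) / ph)) :=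
  stmt6_general p1 p2' p3 pg ph hp1 hp2' hp3 hpg hph
end

section
/- The steady-state third component of the 3×3 stochastic matrix with rows (1−p_h, p₂'+p₃, p₁), (0, 1−p_h, p_h), (p_g, 0, 1−p_g), where p_h = p₁+p₂'+p₃ and all entries are nonnegative with p₁, p_g > 0, equals p_h/(p_h + p_g(1 + (p₂'+p₃)/p_h)). That is, the normalized left eigenvector for eigenvalue 1 has this value in its last coordinate. -/
open Matrix

theorem balance_of_vecMul_eq_self {R : Type*} [CommRing R] {h q r g : R} {v : Fin 3 → R}
    (hv : v ᵥ* !![1 - h, q, r; 0, 1 - h, h; g, 0, 1 - g] = v) :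
    v 0 * h = v 2 * g ∧ v 1 * h = v 0 * q := by
  have h0 := congrFun hv 0
  have h1 := congrFun hv 1
  simp only [vecMul, dotProduct, Fin.sum_univ_three, of_apply, cons_val', cons_val_zero,
    cons_val_one, cons_val_fin_one, cons_val, mul_zero, add_zero] at h0 h1
  exact ⟨by linear_combination -h0, by linear_combination -h1⟩

theorem vecMul_eq_self_apply_two {K : Type*} [Field K] {h q r g : K} {v : Fin 3 → K}
    (hh : h ≠ 0) (hv : v ᵥ* !![1 - h, q, r; 0, 1 - h, h; g, 0, 1 - g] = v)
    (hsum : ∑ i, v i = 1) :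
    v 2 = h / (h + g * (1 + q / h)) := by
  obtain ⟨hv0, hv1⟩ := balance_of_vecMul_eq_self hv
  rw [Fin.sum_univ_three] at hsum
  -- `v₂ g = v₀ h` and `v₂ g q / h = v₀ q = v₁ h`, so `v₂` times the denominator is `h (v₀ + v₁ + v₂)`.
  have key : v 2 * (h + g * (1 + q / h)) = h := by
    field_simp
    linear_combination h ^ 2 * hsum - (h + q) * hv0 - h * hv1
  -- The denominator cannot vanish: `key` exhibits `h ≠ 0` as a multiple of it.
  exact eq_div_of_mul_eq (right_ne_zero_of_mul (key ▸ hh)) key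

theorem stmt7_general (p1 p2' p3 pg ph : ℝ) (hp1 : 0 < p1) (hp2' : 0 ≤ p2') (hp3 : 0 ≤ p3)
    (hph : ph = p1 + p2' + p3)
    (v : Fin 3 → ℝ)
    (hsteady : v ᵥ* !![1 - ph, p2' + p3, p1; 0, 1 - ph, ph; pg, 0, 1 - pg] = v)
    (hsum : ∑ i : Fin 3, v i = 1) :
    v 2 = ph / (ph + pg * (1 + (p2' + p3) / ph)) :=
  vecMul_eq_self_apply_two (by linarith : 0 < ph).ne' hsteady hsum

/-- Any steady-state distribution `π` (i.e. `π P = π`, `∑ π = 1`) of the 3×3 stochastic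
matrix with rows `(1−p_h, p₂'+p₃, p₁)`, `(0, 1−p_h, p_h)`, `(p_g, 0, 1−p_g)`, where
`p_h = p₁+p₂'+p₃`, all entries nonnegative, and `p₁, p_g > 0`, has third component
`p_h / (p_h + p_g(1 + (p₂'+p₃)/p_h))`. -/
theorem stmt7 (p1 p2' p3 pg ph : ℝ) (hp1 : 0 < p1) (hp2' : 0 ≤ p2') (hp3 : 0 ≤ p3)
    (hpg : 0 < pg) (hph : ph = p1 + p2' + p3) (hph1 : ph ≤ 1) (hpg1 : pg ≤ 1)
    (v : Fin 3 → ℝ)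
    (hsteady : v ᵥ* !![1 - ph, p2' + p3, p1; 0, 1 - ph, ph; pg, 0, 1 - pg] = v)
    (hsum : ∑ i : Fin 3, v i = 1) :
    v 2 = ph / (ph + pg * (1 + (p2' + p3) / ph)) :=
  stmt7_general p1 p2' p3 pg ph hp1 hp2' hp3 hph v hsteady hsum
end

section
/- The steady-state third component of the 3×3 stochastic matrix with rows (1−(p₁+p₂'), p₂', p₁), (0, 1−(p₁+p₂'), p₁+p₂'), (p_g, 0, 1−p_g), with p₁, p_g > 0, p₂' ≥ 0, p₁+p₂' ≤ 1, p_g ≤ 1, equals (p₁+p₂')/((p₁+p₂') + p_g(1 + p₂'/(p₁+p₂'))). -/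
open Matrix

/-- Any steady-state distribution `π` of the 3×3 stochastic matrix with rows
`(1−(p₁+p₂'), p₂', p₁)`, `(0, 1−(p₁+p₂'), p₁+p₂')`, `(p_g, 0, 1−p_g)`, with
`p₁, p_g > 0`, `p₂' ≥ 0`, `p₁+p₂' ≤ 1`, `p_g ≤ 1`, has third component
`(p₁+p₂') / ((p₁+p₂') + p_g(1 + p₂'/(p₁+p₂')))`. -/
theorem stmt8 (p1 p2' pg : ℝ) (hp1 : 0 < p1) (hp2' : 0 ≤ p2')
    (hpg : 0 < pg) (hs1 : p1 + p2' ≤ 1) (hpg1 : pg ≤ 1)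
    (v : Fin 3 → ℝ)
    (hsteady : v ᵥ* !![1 - (p1 + p2'), p2', p1; 0, 1 - (p1 + p2'), p1 + p2';
        pg, 0, 1 - pg] = v)
    (hsum : ∑ i : Fin 3, v i = 1) :
    v 2 = (p1 + p2') / ((p1 + p2') + pg * (1 + p2' / (p1 + p2'))) := by
  have h0 := congrFun hsteady 0
  have h1 := congrFun hsteady 1
  simp [vecMul, dotProduct, Fin.sum_univ_three] at h0 h1
  simp [Fin.sum_univ_three] at hsum
  have hs : 0 < p1 + p2' := by linarith
  have hden : 0 < (p1 + p2') + pg * (1 + p2' / (p1 + p2')) := by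
    have : 0 ≤ p2' / (p1 + p2') := div_nonneg hp2' hs.le
    nlinarith
  field_simp
  nlinarith [mul_pos hs hs, sq_nonneg (p1+p2')]
end

section
/- Consider maximizing t = p_t λ_s subject to t ≤ f₁(P_s) and t ≤ f₂(P_s) over P_s > 0, t ≥ 0, where f₁(P_s) = A·(P_s/P_p)^{−2/α} with A = μ_p/(θ_p^{2/α} d_p² φ) − λ_p > 0, and f₂(P_s) = μ_s/(θ_s^{2/α} d_s² φ) − λ_p (P_s/P_p)^{−2/α}. Assume α > 2 and all parameters positive. Since f₁ is strictly decreasing and f₂ is strictly increasing in P_s, the maximum of min(f₁, f₂) is attained at the unique P_s* with f₁(P_s*) = f₂(P_s*), namely P_s* = (θ_s/θ_p)(d_s/d_p)^α (μ_s/μ_p)^{−α/2} P_p, and the maximum value is t* = μ_s(μ_p − φ θ_p^{2/α} d_p² λ_p)/(θ_s^{2/α} d_s² μ_p φ). -/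
open Real Set

/-!
Both constraints are affine in `x = (P_s/P_p)^{-2/α}`, a strictly decreasing function of `P_s`:
`f₁ = A x` and `f₂ = (A + λ_p) G - λ_p x`, where `G` is the value of `x` at `P_s*`. The two lines
cross exactly at `x = G`, and weighting the constraints by `λ_p` and `A` shows `t ≤ A G = t*`.
-/

lemma strictAntiOn_div_rpow_of_neg {P r : ℝ} (hP : 0 < P) (hr : r < 0) :
    StrictAntiOn (fun x : ℝ => (x / P) ^ r) (Ioi 0) :=
  fun _ hx _ _ hxy => rpow_lt_rpow_of_neg (div_pos hx hP) (div_lt_div_of_pos_right hxy hP) hr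

lemma mul_rpow_mul_rpow_neg_two_div {x y z a : ℝ} (hx : 0 < x) (hy : 0 < y) (hz : 0 < z)
    (ha : a ≠ 0) :
    (x * y ^ a * z ^ (-(a / 2))) ^ (-(2 / a)) = x ^ (-(2 / a)) * (y ^ 2)⁻¹ * z := by
  rw [mul_rpow (by positivity) (by positivity), mul_rpow hx.le (by positivity),
    ← rpow_mul hy.le, ← rpow_mul hz.le,
    show a * -(2 / a) = -(2 : ℕ) by field_simp; norm_num,
    show -(a / 2) * -(2 / a) = 1 by field_simp, rpow_neg hy.le, rpow_natCast, rpow_one]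

section AffineConstraints

variable {A l G x t : ℝ}

lemma le_mul_of_le_mul_of_le_sub_mul (hA : 0 ≤ A) (hl : 0 ≤ l) (hAl : 0 < A + l)
    (h₁ : t ≤ A * x) (h₂ : t ≤ (A + l) * G - l * x) : t ≤ A * G :=
  le_of_mul_le_mul_left (a := A + l)
    (by nlinarith [mul_le_mul_of_nonneg_left h₁ hl, mul_le_mul_of_nonneg_left h₂ hA]) hAl

lemma eq_of_mul_eq_sub_mul (hAl : A + l ≠ 0) (h : A * x = (A + l) * G - l * x) : x = G :=
  mul_left_cancel₀ hAl (by linear_combination h)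

end AffineConstraints

/-- Interference-limited secondary throughput maximization: with
`f₁(P_s) = A (P_s/P_p)^{−2/α}` (`A = μ_p/(θ_p^{2/α} d_p² φ) − λ_p > 0`) strictly decreasing and
`f₂(P_s) = μ_s/(θ_s^{2/α} d_s² φ) − λ_p (P_s/P_p)^{−2/α}` strictly increasing on `P_s > 0`,
the maximum of `t` subject to `t ≤ f₁(P_s)`, `t ≤ f₂(P_s)` is attained at the unique
`P_s* = (θ_s/θ_p)(d_s/d_p)^α (μ_s/μ_p)^{−α/2} P_p` with `f₁(P_s*) = f₂(P_s*)`, and equals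
`t* = μ_s(μ_p − φ θ_p^{2/α} d_p² λ_p)/(θ_s^{2/α} d_s² μ_p φ)`. -/
theorem stmt14 (lp Pp θp θs dp ds φ μp μs a : ℝ)
    (hlp : 0 < lp) (hPp : 0 < Pp) (hθp : 0 < θp) (hθs : 0 < θs) (hdp : 0 < dp)
    (hds : 0 < ds) (hφ : 0 < φ) (hμp : 0 < μp) (hμs : 0 < μs) (ha : 2 < a)
    (f1 f2 : ℝ → ℝ) (A Pstar tstar : ℝ)
    (hA : A = μp / (θp ^ (2 / a : ℝ) * dp ^ 2 * φ) - lp) (hApos : 0 < A)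
    (hf1 : ∀ Ps, f1 Ps = A * (Ps / Pp) ^ (-(2 / a) : ℝ))
    (hf2 : ∀ Ps, f2 Ps = μs / (θs ^ (2 / a : ℝ) * ds ^ 2 * φ) -
      lp * (Ps / Pp) ^ (-(2 / a) : ℝ))
    (hPstar : Pstar = (θs / θp) * (ds / dp) ^ (a : ℝ) * (μs / μp) ^ (-(a / 2) : ℝ) * Pp)
    (htstar : tstar = μs * (μp - φ * θp ^ (2 / a : ℝ) * dp ^ 2 * lp) /
      (θs ^ (2 / a : ℝ) * ds ^ 2 * μp * φ)) :
    StrictAntiOn f1 (Set.Ioi 0) ∧ StrictMonoOn f2 (Set.Ioi 0) ∧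
      0 < Pstar ∧ f1 Pstar = f2 Pstar ∧ f1 Pstar = tstar ∧
      (∀ Ps ∈ Set.Ioi (0 : ℝ), ∀ t : ℝ, 0 ≤ t → t ≤ f1 Ps → t ≤ f2 Ps → t ≤ tstar) ∧
      (∀ Ps ∈ Set.Ioi (0 : ℝ), f1 Ps = f2 Ps → Ps = Pstar) := by
  have ha₀ : 0 < a := by linarith
  set g : ℝ → ℝ := fun Ps => (Ps / Pp) ^ (-(2 / a))
  have hg : StrictAntiOn g (Ioi 0) := strictAntiOn_div_rpow_of_neg hPp (by simp [ha₀])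
  set G := θp ^ (2 / a) * dp ^ 2 * μs / (θs ^ (2 / a) * ds ^ 2 * μp)
  have hPstar_pos : 0 < Pstar := by rw [hPstar]; positivity
  have hgPstar : g Pstar = G := by
    simp only [g, hPstar, mul_div_cancel_right₀ _ hPp.ne']
    rw [mul_rpow_mul_rpow_neg_two_div (by positivity) (by positivity) (by positivity) ha₀.ne',
      rpow_neg (by positivity), div_rpow hθs.le hθp.le, div_pow]
    simp only [G]
    field_simp
  have hC : μs / (θs ^ (2 / a) * ds ^ 2 * φ) = (A + lp) * G := by
    rw [hA]; simp only [G]; field_simp; ring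
  have ht : tstar = A * G := by rw [htstar, hA]; simp only [G]; field_simp
  obtain rfl : f1 = fun Ps => A * g Ps := funext hf1
  obtain rfl : f2 = fun Ps => (A + lp) * G - lp * g Ps := funext fun Ps => by rw [hf2, hC]
  have hAl : 0 < A + lp := by linarith
  refine ⟨fun x hx y hy hxy => mul_lt_mul_of_pos_left (hg hx hy hxy) hApos,
    fun x hx y hy hxy => sub_lt_sub_left (mul_lt_mul_of_pos_left (hg hx hy hxy) hlp) _,
    hPstar_pos, ?_, ?_, ?_, ?_⟩
  · simp only [hgPstar]; ring
  · simp only [hgPstar, ht]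
  · intro Ps _ t _ h₁ h₂
    exact ht ▸ le_mul_of_le_mul_of_le_sub_mul hApos.le hlp.le hAl h₁ h₂
  · intro Ps hPs h
    exact hg.injOn hPs hPstar_pos (hgPstar ▸ eq_of_mul_eq_sub_mul hAl.ne' h)
end
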